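/- Let G be a finite group in which every subgroup is normal (a Dedekind group) and A a finite set of size q ≥ 2. Let M be the monoid, under composition, of all G-equivariant transformations of A^G, and let U ⊆ M be its group of units (the bijective G-equivariant transformations). Let E be the number of pairs (H,K) of subgroups of G with H ≤ K, and let I₂ be the number of subgroups of G of index 2. Then the relative rank of U in M — the least cardinality of a finite set V ⊆ M such that U ∪ V generates M as a monoid — equals E − I₂ if q = 2, and equals E if q ≥ 3. -/

import Mathlib

variable {G A : Type*}

/-- The right shift action of `G` on configurations `A^G`: `(x · g) h = x (h * g⁻¹)`. -/
def shift [Group G] (x : G → A) (g : G) : G → A := fun h => x (h * g⁻¹)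

/-- A transformation of the configuration space is `G`-equivariant if it commutes
with the shift action. -/
def equivariant [Group G] (τ : (G → A) → (G → A)) : Prop :=
  ∀ (x : G → A) (g : G), τ (shift x g) = shift (τ x) g

/-- The `G`-orbit of a configuration. -/
def orbit [Group G] (x : G → A) : Set (G → A) := Set.range (shift x)

/-- The stabilizer of a configuration, as a subgroup of `G`. -/
def stab [Group G] (x : G → A) : Subgroup G where
  carrier := {g : G | shift x g = x}
  one_mem' := by
    show shift x 1 = x
    funext h
    simp [shift]
  mul_mem' := by
    intro a b ha hb
    have ha' : shift x a = x := ha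
    have hb' : shift x b = x := hb
    show shift x (a * b) = x
    funext h
    show x (h * (a * b)⁻¹) = x h
    have key : h * (a * b)⁻¹ = h * b⁻¹ * a⁻¹ := by group
    rw [key]
    have h1 := congrFun ha' (h * b⁻¹)
    have h2 := congrFun hb' h
    simp only [shift] at h1 h2
    rw [h1, h2]
  inv_mem' := by
    intro a ha
    have ha' : shift x a = x := ha
    show shift x a⁻¹ = x
    funext h
    show x (h * a⁻¹⁻¹) = x h
    rw [inv_inv]
    have h1 := congrFun ha' (h * a)
    simp only [shift] at h1
    rw [mul_inv_cancel_right] at h1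
    exact h1.symm

/-- Two subgroups `H`, `K` of `G` are conjugate, namely `K = g⁻¹ * H * g` for some `g ∈ G`. -/
def conjSub [Group G] (H K : Subgroup G) : Prop :=
  ∃ g : G, ∀ a : G, a ∈ K ↔ g * a * g⁻¹ ∈ H


/-!
For a Dedekind group `G` all configurations in an orbit of `A^G` share one stabilizer, the type
of the orbit. An equivariant map induces a type-inflationary map on the finite set of orbits, and
every such orbit map is induced by a canonical equivariant one; any equivariant map is such a
canonical map composed with a unit translating each orbit, and the units induce exactly the
type-preserving permutations of orbits. So everything reduces to a finite set of typed points.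

There, a type-inflationary map missing a point `z` factors as the move `z ↦ f z` after a map
with one more fixed point, and moves with the same pair of types `(H, K)` are conjugate by
type-preserving permutations: one move per realizable pair suffices. Conversely, writing a move
`s ↦ t` as a product, its rightmost non-injective factor, composed with a permutation, identifies
only `s` and `t`; so its collisions have types `{H, K}`, and distinct pairs need distinct
generators.

A pair `H ≤ K` is realized by two distinct orbits unless `H = K` and there is a single orbit of
type `H`, which happens exactly when `q = 2` and `[G : H] = 2`.
-/

section TypedMaps

open Function

variable {Ω P : Type*}

def move [DecidableEq Ω] (s t : Ω) : Ω → Ω := update id s t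

def collisionTypes (ty : Ω → P) (f : Ω → Ω) : Set (Sym2 P) :=
  {z | ∃ a b, a ≠ b ∧ f a = f b ∧ z = s(ty a, ty b)}

def TypePreserving (ty : Ω → P) (f : Ω → Ω) : Prop := ∀ ω, ty (f ω) = ty ω

section Move

variable [DecidableEq Ω]

theorem move_apply_self (s t : Ω) : move s t s = t := by simp [move]

theorem move_apply_of_ne {s t ω : Ω} (h : ω ≠ s) : move s t ω = ω := by simp [move, h]

theorem perm_comp_move_comp_symm (π : Equiv.Perm Ω) (s t : Ω) :
    π ∘ move s t ∘ π.symm = move (π s) (π t) := by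
  funext ω
  rcases eq_or_ne ω (π s) with rfl | hω
  · simp [move_apply_self]
  · have : π.symm ω ≠ s := fun h => hω (by rw [← h, Equiv.apply_symm_apply])
    simp [move_apply_of_ne hω, move_apply_of_ne this]

end Move

variable {ty : Ω → P}

theorem typePreserving_swap [DecidableEq Ω] {a b : Ω} (h : ty a = ty b) :
    TypePreserving ty (Equiv.swap a b) := by
  intro ω
  rcases eq_or_ne ω a with rfl | hωa
  · rw [Equiv.swap_apply_left, h]
  rcases eq_or_ne ω b with rfl | hωb
  · rw [Equiv.swap_apply_right, h]
  rw [Equiv.swap_apply_of_ne_of_ne hωa hωb]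

theorem TypePreserving.symm {π : Equiv.Perm Ω} (hπ : TypePreserving ty π) :
    TypePreserving ty π.symm := fun ω => by
  rw [← hπ (π.symm ω), Equiv.apply_symm_apply]

theorem exists_typePreserving_perm [DecidableEq Ω] {s t s' t' : Ω} (hst : s ≠ t)
    (hst' : s' ≠ t') (hs : ty s = ty s') (ht : ty t = ty t') :
    ∃ π : Equiv.Perm Ω, TypePreserving ty π ∧ π s = s' ∧ π t = t' := by
  set σ := Equiv.swap s s'
  have hσ : TypePreserving ty σ := typePreserving_swap hs
  have hσt : σ t ≠ s' :=
    fun h => hst (σ.injective (h.trans (Equiv.swap_apply_left s s').symm)).symm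
  refine ⟨σ.trans (Equiv.swap (σ t) t'), fun ω => ?_, ?_, ?_⟩
  · simp only [Equiv.trans_apply]
    rw [typePreserving_swap ((hσ t).trans ht), hσ]
  · simp [σ, Equiv.swap_apply_of_ne_of_ne hσt.symm hst']
  · simp

theorem collisionTypes_move [DecidableEq Ω] {s t : Ω} (hst : s ≠ t) :
    collisionTypes ty (move s t) = {s(ty s, ty t)} := by
  ext z
  constructor
  · rintro ⟨a, b, hab, he, rfl⟩
    rcases eq_or_ne a s with rfl | has
    · rw [move_apply_self, move_apply_of_ne hab.symm] at he
      simp [he]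
    · rw [move_apply_of_ne has] at he
      rcases eq_or_ne b s with rfl | hbs
      · rw [move_apply_self] at he
        simp [he, Sym2.eq_swap]
      · exact absurd (he.trans (move_apply_of_ne hbs)) hab
  · rintro rfl
    exact ⟨s, t, hst, by rw [move_apply_self, move_apply_of_ne hst.symm], rfl⟩

theorem collisionTypes_nonempty_iff {f : Ω → Ω} :
    (collisionTypes ty f).Nonempty ↔ ¬ Injective f := by
  constructor
  · rintro ⟨_, a, b, hab, he, -⟩ hinj
    exact hab (hinj he)
  · intro hinj
    obtain ⟨a, b, he, hab⟩ : ∃ a b, f a = f b ∧ a ≠ b := by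
      simpa [Injective] using hinj
    exact ⟨_, a, b, hab, he, rfl⟩

theorem collisionTypes_comp_perm {f : Ω → Ω} {π : Equiv.Perm Ω} (hπ : TypePreserving ty π) :
    collisionTypes ty (f ∘ π) = collisionTypes ty f := by
  ext z
  constructor
  · rintro ⟨a, b, hab, he, rfl⟩
    exact ⟨π a, π b, π.injective.ne hab, he, by rw [hπ, hπ]⟩
  · rintro ⟨a, b, hab, he, rfl⟩
    refine ⟨π.symm a, π.symm b, π.symm.injective.ne hab, by simpa using he, ?_⟩
    rw [← hπ (π.symm a), ← hπ (π.symm b)]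
    simp

theorem collisionTypes_mono {f g : Ω → Ω} (h : ∀ a b, f a = f b → g a = g b) :
    collisionTypes ty f ⊆ collisionTypes ty g := by
  rintro _ ⟨a, b, hab, he, rfl⟩
  exact ⟨a, b, hab, h a b he, rfl⟩

variable [PartialOrder P]

variable (ty) in
def TypeInflationary (f : Ω → Ω) : Prop := ∀ ω, ty ω ≤ ty (f ω)

variable (ty) in
/-- The pairs of types `(ty s, ty t)` of the moves `move s t` that are type-inflationary. -/
def movePairs : Set (P × P) :=
  {p | p.1 ≤ p.2 ∧ ∃ s t, s ≠ t ∧ ty s = p.1 ∧ ty t = p.2}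

theorem TypeInflationary.comp {f g : Ω → Ω} (hf : TypeInflationary ty f)
    (hg : TypeInflationary ty g) : TypeInflationary ty (f ∘ g) :=
  fun ω => (hg ω).trans (hf (g ω))

theorem TypePreserving.typeInflationary {f : Ω → Ω} (hf : TypePreserving ty f) :
    TypeInflationary ty f :=
  fun ω => (hf ω).ge

theorem typeInflationary_move [DecidableEq Ω] {s t : Ω} (h : ty s ≤ ty t) :
    TypeInflationary ty (move s t) := by
  intro ω
  rcases eq_or_ne ω s with rfl | hω
  · rwa [move_apply_self]
  · rw [move_apply_of_ne hω]

theorem TypeInflationary.typePreserving_of_bijective [Finite Ω] {f : Ω → Ω}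
    (hf : TypeInflationary ty f) (hbij : Bijective f) : TypePreserving ty f := by
  have hiter : ∀ n ω, ty ω ≤ ty (f^[n] ω) := by
    intro n
    induction n with
    | zero => exact fun ω => le_rfl
    | succ n ih => exact fun ω => (ih ω).trans (by rw [iterate_succ_apply']; exact hf _)
  obtain ⟨n, hn, hpow⟩ := (isOfFinOrder_of_finite (Equiv.ofBijective f hbij)).exists_pow_eq_one
  obtain ⟨m, rfl⟩ : ∃ m, n = m + 1 := ⟨n - 1, by omega⟩
  have hperiod : ∀ ω, f^[m + 1] ω = ω := fun ω => by
    simpa [Equiv.Perm.coe_pow] using congrArg (fun π : Equiv.Perm Ω => π ω) hpow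
  intro ω
  refine le_antisymm ?_ (hf ω)
  calc ty (f ω) ≤ ty (f^[m] (f ω)) := hiter _ _
    _ = ty ω := by rw [← iterate_succ_apply, hperiod]

/-- If `z` is not a value of `f`, then `f = move z (f z) ∘ update f z z`, and the second factor
has one more fixed point. -/
theorem TypeInflationary.induction [Finite Ω] [DecidableEq Ω] {p : (Ω → Ω) → Prop}
    (perm : ∀ π : Equiv.Perm Ω, TypePreserving ty π → p π)
    (move_comp : ∀ s t f, s ≠ t → ty s ≤ ty t → TypeInflationary ty f → p f →
      p (move s t ∘ f))
    {f : Ω → Ω} (hf : TypeInflationary ty f) : p f := by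
  obtain ⟨n, hn⟩ : ∃ n, {ω | f ω ≠ ω}.ncard = n := ⟨_, rfl⟩
  induction n using Nat.strong_induction_on generalizing f with
  | _ n ih =>
  by_cases hsurj : Surjective f
  · have hbij := hsurj.bijective_of_finite
    exact perm (Equiv.ofBijective f hbij) (hf.typePreserving_of_bijective hbij)
  obtain ⟨z, hz⟩ := not_forall.1 hsurj
  have hz : ∀ ω, f ω ≠ z := fun ω h => hz ⟨ω, h⟩
  have hfactor : move z (f z) ∘ update f z z = f := by
    funext ω
    rcases eq_or_ne ω z with rfl | hω
    · simp [move_apply_self]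
    · simp [update_of_ne hω, move_apply_of_ne (hz ω)]
  have hf' : TypeInflationary ty (update f z z) := by
    intro ω
    rcases eq_or_ne ω z with rfl | hω
    · simp
    · simpa [update_of_ne hω] using hf ω
  have hfewer : {ω | update f z z ω ≠ ω} ⊂ {ω | f ω ≠ ω} := by
    refine Set.ssubset_iff_of_subset (fun ω hω => ?_) |>.2 ⟨z, hz z, by simp⟩
    rcases eq_or_ne ω z with rfl | hne
    · simp at hω
    · simpa [update_of_ne hne] using hω
  rw [← hfactor]
  exact move_comp z (f z) _ (hz z).symm (hf z) hf'
    (ih _ (hn ▸ Set.ncard_lt_ncard hfewer) hf' rfl)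

/-- In a product of type-inflationary maps, the rightmost non-injective factor `f`, composed with
the injective (hence type-preserving bijective) product `π` of the factors to its right,
only identifies points that the whole product identifies. -/
theorem exists_collisionTypes_subset [Finite Ω] {S : Set (Function.End Ω)}
    (hS : ∀ f ∈ S, TypeInflationary ty f) {F : Function.End Ω} (hF : F ∈ Submonoid.closure S)
    (hninj : ¬ Injective F) :
    ∃ f ∈ S, (collisionTypes ty f).Nonempty ∧
      collisionTypes ty f ⊆ collisionTypes ty F := by
  suffices key : TypeInflationary ty F ∧ (Injective F ∨ ∃ f ∈ S, ∃ π : Equiv.Perm Ω,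
      TypePreserving ty π ∧ ¬ Injective (f ∘ π) ∧
        ∀ a b, f (π a) = f (π b) → F a = F b) by
    obtain ⟨-, hinj | ⟨f, hfS, π, hπ, hfπ, hcoll⟩⟩ := key
    · exact absurd hinj hninj
    have hne := collisionTypes_nonempty_iff (ty := ty).2 hfπ
    have hsub := collisionTypes_mono (ty := ty) (f := f ∘ π) hcoll
    rw [collisionTypes_comp_perm (f := f) hπ] at hne hsub
    exact ⟨f, hfS, hne, hsub⟩
  clear hninj
  induction hF using Submonoid.closure_induction_left with
  | one => exact ⟨fun ω => le_rfl, Or.inl injective_id⟩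
  | mul_left f hfS G _ ih =>
    obtain ⟨hG, hinj | ⟨f', hf'S, π, hπ, hf'π, hcoll⟩⟩ := ih
    · refine ⟨(hS f hfS).comp hG, ?_⟩
      by_cases hfG : Injective (f ∘ G)
      · exact Or.inl hfG
      · have hbij := hinj.bijective_of_finite
        exact Or.inr ⟨f, hfS, Equiv.ofBijective G hbij,
          hG.typePreserving_of_bijective hbij, hfG, fun a b h => h⟩
    · exact ⟨(hS f hfS).comp hG, Or.inr ⟨f', hf'S, π, hπ, hf'π,
        fun a b h => congrArg f (hcoll a b h)⟩⟩

end TypedMaps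

theorem Prod.eq_of_sym2_eq {P : Type*} [PartialOrder P] {p q : P × P} (hp : p.1 ≤ p.2)
    (hq : q.1 ≤ q.2) (h : s(p.1, p.2) = s(q.1, q.2)) : p = q := by
  rcases Sym2.eq_iff.1 h with ⟨h1, h2⟩ | ⟨h1, h2⟩
  · exact Prod.ext h1 h2
  · have h3 : p.1 = p.2 := le_antisymm hp (by rw [h1, h2]; exact hq)
    exact Prod.ext (h3.trans h2) (h3.symm.trans h1)

section Orbits

open Function

variable [Group G]

theorem shift_shift (x : G → A) (g h : G) : shift (shift x g) h = shift x (g * h) := by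
  funext k
  simp [shift, mul_assoc]

theorem shift_one (x : G → A) : shift x 1 = x := by
  funext k
  simp [shift]

theorem mem_stab {x : G → A} {g : G} : g ∈ stab x ↔ shift x g = x := Iff.rfl

theorem shift_eq_shift_iff {x : G → A} {a b : G} :
    shift x a = shift x b ↔ a * b⁻¹ ∈ stab x := by
  rw [mem_stab]
  constructor
  · intro h
    rw [← shift_shift, h, shift_shift, mul_inv_cancel, shift_one]
  · intro h
    calc shift x a = shift x (a * b⁻¹ * b) := by rw [inv_mul_cancel_right]
      _ = shift x b := by rw [← shift_shift, h]

theorem shift_eq_shift_of_stab_le {x y : G → A} (h : stab x ≤ stab y) {a b : G}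
    (hab : shift x a = shift x b) : shift y a = shift y b :=
  shift_eq_shift_iff.2 (h (shift_eq_shift_iff.1 hab))

theorem stab_shift (hded : ∀ H : Subgroup G, H.Normal) (x : G → A) (g : G) :
    stab (shift x g) = stab x := by
  ext k
  have hk : shift (shift x g) k = shift x g ↔ g * k * g⁻¹ ∈ stab x := by
    rw [shift_shift, shift_eq_shift_iff]
  rw [mem_stab, hk]
  constructor
  · intro h
    simpa [mul_assoc] using (hded (stab x)).conj_mem _ h g⁻¹
  · exact fun h => (hded (stab x)).conj_mem k h g

theorem equivariant.stab_le {τ : (G → A) → G → A} (hτ : equivariant τ) (x : G → A) :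
    stab x ≤ stab (τ x) := fun g hg => by
  rw [mem_stab] at hg ⊢
  rw [← hτ, hg]

theorem equivariant.comp {σ τ : (G → A) → G → A} (hσ : equivariant σ)
    (hτ : equivariant τ) : equivariant (σ ∘ τ) := fun x g => by
  simp only [Function.comp_apply, hτ x g, hσ (τ x) g]

variable (G A) in
def orbitSetoid : Setoid (G → A) where
  r x y := y ∈ orbit x
  iseqv := by
    refine ⟨fun x => ⟨1, shift_one x⟩, ?_, ?_⟩
    · rintro x _ ⟨g, rfl⟩
      exact ⟨g⁻¹, by rw [shift_shift, mul_inv_cancel, shift_one]⟩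
    · rintro x _ _ ⟨g, rfl⟩ ⟨h, rfl⟩
      exact ⟨g * h, (shift_shift x g h).symm⟩

variable (G A) in
def Orbits : Type _ := Quotient (orbitSetoid G A)

def toOrbit (x : G → A) : Orbits G A := Quotient.mk _ x

noncomputable def Orbits.rep (ω : Orbits G A) : G → A := Quotient.out ω

/-- The stabilizer of the chosen representative; for a Dedekind group every configuration of
the orbit has this stabilizer (`Orbits.stabilizer_toOrbit`). -/
noncomputable def Orbits.stabilizer (ω : Orbits G A) : Subgroup G := _root_.stab ω.rep

theorem toOrbit_eq_toOrbit {x y : G → A} : toOrbit x = toOrbit y ↔ ∃ g, shift x g = y :=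
  Quotient.eq (r := orbitSetoid G A)

theorem toOrbit_shift (x : G → A) (g : G) : toOrbit (shift x g) = toOrbit x :=
  toOrbit_eq_toOrbit.2 ⟨g⁻¹, by rw [shift_shift, mul_inv_cancel, shift_one]⟩

theorem toOrbit_rep (ω : Orbits G A) : toOrbit ω.rep = ω := Quotient.out_eq ω

theorem exists_shift_rep (x : G → A) : ∃ g, shift (toOrbit x).rep g = x :=
  toOrbit_eq_toOrbit.1 (toOrbit_rep (toOrbit x))

theorem Orbits.stabilizer_toOrbit (hded : ∀ H : Subgroup G, H.Normal) (x : G → A) :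
    (toOrbit x).stabilizer = stab x := by
  obtain ⟨g, hg⟩ := exists_shift_rep x
  show stab (toOrbit x).rep = stab x
  rw [← stab_shift hded _ g, hg]

instance [Finite G] [Finite A] : Finite (Orbits G A) := Quotient.finite _

instance [Nonempty A] : Nonempty (Orbits G A) := ⟨toOrbit (Classical.arbitrary _)⟩

theorem equivariant_ext {σ τ : (G → A) → G → A} (hσ : equivariant σ)
    (hτ : equivariant τ) (h : ∀ ω : Orbits G A, σ ω.rep = τ ω.rep) : σ = τ := by
  funext x
  obtain ⟨g, hg⟩ := exists_shift_rep x
  rw [← hg, hσ, hτ, h]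

noncomputable def orbitMap (τ : (G → A) → G → A) : Function.End (Orbits G A) :=
  fun ω => toOrbit (τ ω.rep)

theorem orbitMap_toOrbit {τ : (G → A) → G → A} (hτ : equivariant τ) (x : G → A) :
    orbitMap τ (toOrbit x) = toOrbit (τ x) := by
  obtain ⟨g, hg⟩ := exists_shift_rep x
  calc orbitMap τ (toOrbit x) = toOrbit (shift (τ (toOrbit x).rep) g) := (toOrbit_shift _ _).symm
    _ = toOrbit (τ x) := by rw [← hτ, hg]

theorem orbitMap_one : orbitMap (1 : Function.End (G → A)) = 1 := funext toOrbit_rep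

theorem orbitMap_mul {σ : Function.End (G → A)} (hσ : equivariant σ)
    (τ : Function.End (G → A)) : orbitMap (σ * τ) = orbitMap σ * orbitMap τ :=
  funext fun _ => (orbitMap_toOrbit hσ _).symm

theorem typeInflationary_orbitMap (hded : ∀ H : Subgroup G, H.Normal)
    {τ : (G → A) → G → A} (hτ : equivariant τ) :
    TypeInflationary Orbits.stabilizer (orbitMap τ) :=
  fun ω => (hτ.stab_le ω.rep).trans_eq (Orbits.stabilizer_toOrbit hded _).symm

theorem surjective_orbitMap {τ : (G → A) → G → A} (hτ : equivariant τ)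
    (hsurj : Surjective τ) : Surjective (orbitMap τ) := by
  intro ω
  obtain ⟨x, hx⟩ := hsurj ω.rep
  exact ⟨toOrbit x, by rw [orbitMap_toOrbit hτ, hx, toOrbit_rep]⟩

theorem bijective_of_orbitMap (hded : ∀ H : Subgroup G, H.Normal) {τ : (G → A) → G → A}
    (hτ : equivariant τ) (hbij : Bijective (orbitMap τ))
    (hpres : TypePreserving Orbits.stabilizer (orbitMap τ)) : Bijective τ := by
  constructor
  · intro x y hxy
    have hxy' : toOrbit x = toOrbit y :=
      hbij.1 (by rw [orbitMap_toOrbit hτ, orbitMap_toOrbit hτ, hxy])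
    obtain ⟨g, rfl⟩ := toOrbit_eq_toOrbit.1 hxy'
    have hg : g ∈ stab (τ x) := by rw [mem_stab, ← hτ, hxy]
    rw [← Orbits.stabilizer_toOrbit hded, ← orbitMap_toOrbit hτ, hpres,
      Orbits.stabilizer_toOrbit hded, mem_stab] at hg
    exact hg.symm
  · intro y
    obtain ⟨ω, hω⟩ := hbij.2 (toOrbit y)
    obtain ⟨g, rfl⟩ := toOrbit_eq_toOrbit.1 hω
    exact ⟨shift ω.rep g, hτ _ _⟩

end Orbits

section Extend

open Function

variable [Group G]

/-- Sends `ω.rep` to `y ω` and extends equivariantly; this is consistent as soon as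
`stab ω.rep ≤ stab (y ω)` for every orbit `ω`. -/
noncomputable def ofReps (y : Orbits G A → G → A) (x : G → A) : G → A :=
  shift (y (toOrbit x)) (exists_shift_rep x).choose

variable {y : Orbits G A → G → A}

theorem ofReps_eq (hy : ∀ ω, stab ω.rep ≤ stab (y ω)) {x : G → A} {g : G}
    (hg : shift (toOrbit x).rep g = x) : ofReps y x = shift (y (toOrbit x)) g :=
  shift_eq_shift_of_stab_le (hy _) ((exists_shift_rep x).choose_spec.trans hg.symm)

theorem ofReps_equivariant (hy : ∀ ω, stab ω.rep ≤ stab (y ω)) : equivariant (ofReps y) := by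
  intro x g
  obtain ⟨c, hc⟩ := exists_shift_rep x
  have hcg : shift (toOrbit (shift x g)).rep (c * g) = shift x g := by
    rw [toOrbit_shift, ← shift_shift, hc]
  rw [ofReps_eq hy hcg, ofReps_eq hy hc, toOrbit_shift, shift_shift]

theorem ofReps_rep (hy : ∀ ω, stab ω.rep ≤ stab (y ω)) (ω : Orbits G A) :
    ofReps y ω.rep = y ω := by
  have h1 : shift (toOrbit ω.rep).rep 1 = ω.rep := by rw [toOrbit_rep, shift_one]
  rw [ofReps_eq hy h1, toOrbit_rep, shift_one]

variable {F F' : Orbits G A → Orbits G A}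

noncomputable def ofOrbitMap (F : Orbits G A → Orbits G A) : (G → A) → G → A :=
  ofReps fun ω => (F ω).rep

theorem ofOrbitMap_equivariant (hF : TypeInflationary Orbits.stabilizer F) :
    equivariant (ofOrbitMap F) :=
  ofReps_equivariant hF

theorem ofOrbitMap_rep (hF : TypeInflationary Orbits.stabilizer F) (ω : Orbits G A) :
    ofOrbitMap F ω.rep = (F ω).rep :=
  ofReps_rep hF ω

theorem orbitMap_ofOrbitMap (hF : TypeInflationary Orbits.stabilizer F) :
    orbitMap (ofOrbitMap F) = F := by
  funext ω
  rw [orbitMap, ofOrbitMap_rep hF, toOrbit_rep]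

theorem ofOrbitMap_comp (hF : TypeInflationary Orbits.stabilizer F)
    (hF' : TypeInflationary Orbits.stabilizer F') :
    ofOrbitMap (F ∘ F') = ofOrbitMap F ∘ ofOrbitMap F' := by
  refine equivariant_ext (ofOrbitMap_equivariant (hF.comp hF'))
    ((ofOrbitMap_equivariant hF).comp (ofOrbitMap_equivariant hF')) fun ω => ?_
  simp only [comp_apply, ofOrbitMap_rep (hF.comp hF'), ofOrbitMap_rep hF', ofOrbitMap_rep hF]

theorem exists_bijective_eq_ofOrbitMap_comp (hded : ∀ H : Subgroup G, H.Normal)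
    {σ : (G → A) → G → A} (hσ : equivariant σ) :
    ∃ u, equivariant u ∧ Bijective u ∧ σ = ofOrbitMap (orbitMap σ) ∘ u := by
  have hF := typeInflationary_orbitMap hded hσ
  choose g hg using fun ω : Orbits G A => toOrbit_eq_toOrbit.1 (toOrbit_rep (orbitMap σ ω))
  have hy : ∀ ω : Orbits G A, stab ω.rep ≤ stab (shift ω.rep (g ω)) :=
    fun ω => (stab_shift hded _ _).ge
  have hu := ofReps_equivariant hy
  have hid : orbitMap (ofReps fun ω => shift ω.rep (g ω)) = id := by
    funext ω
    rw [orbitMap, ofReps_rep hy, toOrbit_shift, toOrbit_rep, id]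
  refine ⟨_, hu, bijective_of_orbitMap hded hu (hid ▸ bijective_id) (hid ▸ fun _ => rfl),
    ?_⟩
  refine equivariant_ext hσ ((ofOrbitMap_equivariant hF).comp hu) fun ω => ?_
  rw [comp_apply, ofReps_rep hy, ofOrbitMap_equivariant hF, ofOrbitMap_rep hF, hg]

end Extend

section PrescribedStabilizer

variable [Group G]

theorem stab_ite (H : Subgroup G) [DecidablePred (· ∈ H)] {u v : A} (huv : u ≠ v) :
    stab (fun g => if g ∈ H then u else v) = H := by
  ext k
  rw [mem_stab]
  constructor
  · intro h
    have h1 := congrFun h 1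
    simp only [shift, one_mul, one_mem, if_true, inv_mem_iff] at h1
    by_contra hk
    rw [if_neg hk] at h1
    exact huv h1.symm
  · intro hk
    funext g
    simp only [shift, Subgroup.mul_mem_cancel_right H (inv_mem hk)]

theorem exists_stab_eq [Nontrivial A] (H : Subgroup G) : ∃ x : G → A, stab x = H := by
  classical
  obtain ⟨u, v, huv⟩ := exists_pair_ne A
  exact ⟨_, stab_ite H huv⟩

theorem exists_stab_eq_toOrbit_ne [Fintype A] [Nontrivial A] (H : Subgroup G)
    (h : 2 < Fintype.card A ∨ H.index ≠ 2) :
    ∃ x y : G → A, stab x = H ∧ stab y = H ∧ toOrbit x ≠ toOrbit y := by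
  classical
  rcases h with h3 | h2
  · obtain ⟨a, b, c, hab, hac, hbc⟩ := Fintype.two_lt_card_iff.1 h3
    refine ⟨_, _, stab_ite H hab, stab_ite H hbc.symm, fun he => ?_⟩
    obtain ⟨g, hg⟩ := toOrbit_eq_toOrbit.1 he
    -- the translate of `x` takes the value `a` at `g`, whereas `y` only takes `c` and `b`
    have hg' := congrFun hg g
    simp only [shift, mul_inv_cancel, one_mem, if_true] at hg'
    split_ifs at hg' with hgH
    exacts [hac hg', hab hg']
  · obtain ⟨a, b, hab⟩ := exists_pair_ne A
    refine ⟨_, _, stab_ite H hab, stab_ite H hab.symm, fun he => h2 ?_⟩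
    obtain ⟨g, hg⟩ := toOrbit_eq_toOrbit.1 he
    -- the right coset `H * g` would be the complement of `H`
    refine Subgroup.index_eq_two_iff.2 ⟨g⁻¹, fun k => ?_⟩
    have hk := congrFun hg k
    simp only [shift] at hk
    by_cases hkH : k ∈ H <;> by_cases hkg : k * g⁻¹ ∈ H <;> simp_all [eq_comm]

theorem apply_eq_apply_of_index_eq_two {H : Subgroup G} (hH : H.index = 2) {x : G → A}
    (hx : H ≤ stab x) {b c : G} (hbc : b ∈ H ↔ c ∈ H) : x b = x c := by
  have hk : b⁻¹ * c ∈ H := by rw [Subgroup.mul_mem_iff_of_index_two hH, inv_mem_iff, hbc]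
  have := congrFun (hx (inv_mem hk)) b
  simp only [shift, inv_inv, mul_inv_cancel_left] at this
  exact this.symm

theorem eq_or_eq_of_card_eq_two [Fintype A] (hA : Fintype.card A = 2) {u v : A} (huv : u ≠ v)
    (w : A) : w = u ∨ w = v := by
  by_contra h
  rw [not_or] at h
  have := Fintype.two_lt_card_iff.2 ⟨u, v, w, huv, Ne.symm h.1, Ne.symm h.2⟩
  omega

/-- With two letters, a configuration with stabilizer `H` of index two is determined by its two
values on `H` and on the other coset, and translating by an element off `H` swaps them. -/
theorem toOrbit_eq_of_stab_eq [Fintype A] (hA : Fintype.card A = 2) {H : Subgroup G}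
    (hH : H.index = 2) {x y : G → A} (hx : stab x = H) (hy : stab y = H) :
    toOrbit x = toOrbit y := by
  classical
  obtain ⟨a, ha⟩ := Subgroup.index_eq_two_iff.1 hH
  have haH : a ∉ H := by simpa [Xor] using ha 1
  have hval : ∀ {z : G → A}, stab z = H → ∀ b, z b = if b ∈ H then z 1 else z a := by
    intro z hz b
    split_ifs with hb
    · exact apply_eq_apply_of_index_eq_two hH hz.ge (by simp [hb])
    · exact apply_eq_apply_of_index_eq_two hH hz.ge (by simp [hb, haH])
  have hne : ∀ {z : G → A}, stab z = H → z 1 ≠ z a := by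
    intro z hz h1a
    apply haH
    rw [← hz, mem_stab]
    funext b
    simp only [shift]
    rw [hval hz, hval hz b]
    split_ifs <;> simp [h1a]
  rw [toOrbit_eq_toOrbit]
  rcases eq_or_eq_of_card_eq_two hA (hne hx) (y 1) with h1 | h1
  · have ha' : y a = x a := (eq_or_eq_of_card_eq_two hA (hne hx) (y a)).resolve_left
      (h1 ▸ (hne hy).symm)
    refine ⟨1, funext fun b => ?_⟩
    rw [shift_one, hval hx, hval hy b, h1, ha']
  · have ha' : y a = x 1 := (eq_or_eq_of_card_eq_two hA (hne hx) (y a)).resolve_right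
      (h1 ▸ (hne hy).symm)
    refine ⟨a⁻¹, funext fun b => ?_⟩
    simp only [shift, inv_inv]
    rw [hval hx, hval hy b, Subgroup.mul_mem_iff_of_index_two hH]
    by_cases hb : b ∈ H <;> simp [hb, haH, h1, ha']

end PrescribedStabilizer

section RelativeRank

open Function

variable [Group G]

variable (G A) in
def ICA : Set (Function.End (G → A)) := {τ | equivariant τ ∧ Bijective τ}

theorem ofOrbitMap_mem_ICA (hded : ∀ H : Subgroup G, H.Normal) {π : Equiv.Perm (Orbits G A)}
    (hπ : TypePreserving Orbits.stabilizer π) : ofOrbitMap π ∈ ICA G A := by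
  have hπ' := hπ.typeInflationary
  refine ⟨ofOrbitMap_equivariant hπ',
    bijective_of_orbitMap hded (ofOrbitMap_equivariant hπ') ?_ ?_⟩
  · rw [orbitMap_ofOrbitMap hπ']
    exact π.bijective
  · rwa [orbitMap_ofOrbitMap hπ']

theorem ofOrbitMap_move_mem (hded : ∀ H : Subgroup G, H.Normal)
    {M : Submonoid (Function.End (G → A))} (hU : ICA G A ⊆ M) {s t s' t' : Orbits G A}
    (hst : s ≠ t) (hst' : s' ≠ t') (hs : s.stabilizer = s'.stabilizer)
    (ht : t.stabilizer = t'.stabilizer) [DecidableEq (Orbits G A)]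
    (hle : s.stabilizer ≤ t.stabilizer) (hmem : ofOrbitMap (move s t) ∈ M) :
    ofOrbitMap (move s' t') ∈ M := by
  obtain ⟨π, hπ, rfl, rfl⟩ := exists_typePreserving_perm hst hst' hs ht
  have hF := typeInflationary_move (ty := Orbits.stabilizer) hle
  rw [← perm_comp_move_comp_symm, ofOrbitMap_comp hπ.typeInflationary
    (hF.comp hπ.symm.typeInflationary), ofOrbitMap_comp hF hπ.symm.typeInflationary]
  exact M.mul_mem (hU (ofOrbitMap_mem_ICA hded hπ))
    (M.mul_mem hmem (hU (ofOrbitMap_mem_ICA hded hπ.symm)))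

theorem mem_of_ofOrbitMap_move_mem [Finite G] [Finite A] (hded : ∀ H : Subgroup G, H.Normal)
    {M : Submonoid (Function.End (G → A))} (hU : ICA G A ⊆ M) [DecidableEq (Orbits G A)]
    (hmove : ∀ s t : Orbits G A, s ≠ t → s.stabilizer ≤ t.stabilizer →
      ofOrbitMap (move s t) ∈ M)
    {σ : Function.End (G → A)} (hσ : equivariant σ) : σ ∈ M := by
  obtain ⟨u, hu, hubij, hσu⟩ := exists_bijective_eq_ofOrbitMap_comp hded hσ
  rw [hσu]
  refine M.mul_mem ?_ (hU ⟨hu, hubij⟩)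
  refine TypeInflationary.induction (p := fun F => ofOrbitMap F ∈ M)
    (fun π hπ => hU (ofOrbitMap_mem_ICA hded hπ))
    (fun s t F hst hle hF hFM => ?_) (typeInflationary_orbitMap hded hσ)
  rw [ofOrbitMap_comp (typeInflationary_move hle) hF]
  exact M.mul_mem (hmove s t hst hle) hFM

theorem exists_generating_finset [Finite G] [Finite A] [Nonempty A]
    (hded : ∀ H : Subgroup G, H.Normal) :
    ∃ V : Finset (Function.End (G → A)),
      V.card ≤ (movePairs (Orbits.stabilizer (G := G) (A := A))).ncard ∧
      (∀ τ ∈ V, equivariant τ) ∧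
      ∀ σ : Function.End (G → A), equivariant σ →
        σ ∈ Submonoid.closure (ICA G A ∪ ↑V) := by
  classical
  have hfin := (movePairs (Orbits.stabilizer (G := G) (A := A))).toFinite
  choose! s t hst hs ht using fun p (hp : p ∈ movePairs (Orbits.stabilizer (G := G) (A := A))) =>
    hp.2
  have hle : ∀ p ∈ movePairs Orbits.stabilizer, (s p).stabilizer ≤ (t p).stabilizer :=
    fun p hp => (hs p hp).trans_le (hp.1.trans_eq (ht p hp).symm)
  set V := hfin.toFinset.image fun p => (ofOrbitMap (move (s p) (t p)) : Function.End (G → A))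
  refine ⟨V, Finset.card_image_le.trans (Set.ncard_eq_toFinset_card _ hfin).ge, ?_,
    fun σ hσ => mem_of_ofOrbitMap_move_mem hded
      (Set.subset_union_left.trans Submonoid.subset_closure) (fun s' t' hst' hle' => ?_) hσ⟩
  · intro τ hτ
    obtain ⟨p, hp, rfl⟩ := Finset.mem_image.1 hτ
    rw [Set.Finite.mem_toFinset] at hp
    exact ofOrbitMap_equivariant (typeInflationary_move (hle p hp))
  · have hp : (s'.stabilizer, t'.stabilizer) ∈ movePairs Orbits.stabilizer :=
      ⟨hle', s', t', hst', rfl, rfl⟩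
    exact ofOrbitMap_move_mem hded (Set.subset_union_left.trans Submonoid.subset_closure)
      (hst _ hp) hst' (hs _ hp) (ht _ hp) (hle _ hp) (Submonoid.subset_closure
        (Or.inr (Finset.mem_image_of_mem _ (hfin.mem_toFinset.2 hp))))

theorem orbitMap_mem_closure {S : Set (Function.End (G → A))} (hS : ∀ τ ∈ S, equivariant τ)
    {σ : Function.End (G → A)} (hσ : σ ∈ Submonoid.closure S) :
    orbitMap σ ∈ Submonoid.closure (orbitMap '' S) := by
  induction hσ using Submonoid.closure_induction_left with
  | one => exact orbitMap_one (G := G) (A := A) ▸ Submonoid.one_mem _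
  | mul_left τ hτ σ _ ih =>
    rw [orbitMap_mul (hS τ hτ)]
    exact Submonoid.mul_mem _ (Submonoid.subset_closure ⟨τ, hτ, rfl⟩) ih

theorem exists_mem_collisionTypes_eq [Finite G] [Finite A] (hded : ∀ H : Subgroup G, H.Normal)
    {V : Set (Function.End (G → A))} (hV : ∀ τ ∈ V, equivariant τ)
    (hgen : ∀ σ : Function.End (G → A), equivariant σ →
      σ ∈ Submonoid.closure (ICA G A ∪ V))
    {p : Subgroup G × Subgroup G} (hp : p ∈ movePairs (Orbits.stabilizer (A := A))) :
    ∃ τ ∈ V, collisionTypes Orbits.stabilizer (orbitMap τ) = {s(p.1, p.2)} := by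
  classical
  rcases p with ⟨H, K⟩
  obtain ⟨hle, s, t, hst, hs, ht⟩ := hp
  dsimp only at hle hs ht ⊢
  subst hs ht
  have hF := typeInflationary_move (ty := Orbits.stabilizer) hle
  have hSeq : ∀ τ ∈ ICA G A ∪ V, equivariant τ := fun τ hτ => hτ.elim And.left (hV τ)
  have hmem := orbitMap_mem_closure hSeq (hgen _ (ofOrbitMap_equivariant hF))
  rw [orbitMap_ofOrbitMap hF] at hmem
  have hninj : ¬ Injective (move s t) := by
    rw [← collisionTypes_nonempty_iff (ty := Orbits.stabilizer), collisionTypes_move hst]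
    exact Set.singleton_nonempty _
  obtain ⟨_, ⟨τ, hτ, rfl⟩, hne, hsub⟩ := exists_collisionTypes_subset
    (by rintro _ ⟨τ, hτ, rfl⟩; exact typeInflationary_orbitMap hded (hSeq τ hτ)) hmem hninj
  rw [collisionTypes_move hst] at hsub
  rcases hτ with hU | hVτ
  · exact absurd (Finite.injective_iff_surjective.2 (surjective_orbitMap hU.1 hU.2.2))
      (collisionTypes_nonempty_iff.1 hne)
  · exact ⟨τ, hVτ, hne.subset_singleton_iff.1 hsub⟩

theorem ncard_movePairs_le_card [Finite G] [Finite A] (hded : ∀ H : Subgroup G, H.Normal)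
    {V : Finset (Function.End (G → A))} (hV : ∀ τ ∈ V, equivariant τ)
    (hgen : ∀ σ : Function.End (G → A), equivariant σ →
      σ ∈ Submonoid.closure (ICA G A ∪ ↑V)) :
    (movePairs (Orbits.stabilizer (G := G) (A := A))).ncard ≤ V.card := by
  choose! τ hτV hτ using fun p (hp : p ∈ movePairs Orbits.stabilizer) =>
    exists_mem_collisionTypes_eq hded hV hgen hp
  rw [← Set.ncard_coe_finset]
  refine Set.ncard_le_ncard_of_injOn τ hτV fun p hp q hq hpq => Prod.eq_of_sym2_eq hp.1 hq.1 ?_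
  rw [← Set.singleton_eq_singleton_iff, ← hτ p hp, ← hτ q hq, hpq]

theorem mem_movePairs_iff (hded : ∀ H : Subgroup G, H.Normal) [Fintype A] [Nontrivial A]
    {p : Subgroup G × Subgroup G} :
    p ∈ movePairs (Orbits.stabilizer (A := A)) ↔
      p.1 ≤ p.2 ∧ ¬ (p.1 = p.2 ∧ Fintype.card A = 2 ∧ p.1.index = 2) := by
  refine ⟨fun ⟨hle, s, t, hst, hs, ht⟩ => ⟨hle, fun ⟨heq, hA, hH⟩ => hst ?_⟩,
    fun ⟨hle, hp⟩ => ⟨hle, ?_⟩⟩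
  · rw [← toOrbit_rep s, ← toOrbit_rep t]
    exact toOrbit_eq_of_stab_eq hA hH hs (ht.trans heq.symm)
  by_cases heq : p.1 = p.2
  · have h : 2 < Fintype.card A ∨ p.1.index ≠ 2 := by
      have := Fintype.one_lt_card (α := A)
      by_cases hA : Fintype.card A = 2
      · exact Or.inr fun hH => hp ⟨heq, hA, hH⟩
      · omega
    obtain ⟨x, y, hx, hy, hxy⟩ := exists_stab_eq_toOrbit_ne p.1 h
    exact ⟨toOrbit x, toOrbit y, hxy, by rw [Orbits.stabilizer_toOrbit hded, hx],
      by rw [Orbits.stabilizer_toOrbit hded, hy, heq]⟩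
  · obtain ⟨x, hx⟩ := exists_stab_eq (A := A) p.1
    obtain ⟨y, hy⟩ := exists_stab_eq (A := A) p.2
    have hsx : (toOrbit x).stabilizer = p.1 := by rw [Orbits.stabilizer_toOrbit hded, hx]
    have hsy : (toOrbit y).stabilizer = p.2 := by rw [Orbits.stabilizer_toOrbit hded, hy]
    exact ⟨toOrbit x, toOrbit y, fun h => heq (hsx.symm.trans (h ▸ hsy)), hsx, hsy⟩

theorem ncard_movePairs [Finite G] (hded : ∀ H : Subgroup G, H.Normal) [Fintype A]
    [Nontrivial A] :
    (movePairs (Orbits.stabilizer (G := G) (A := A))).ncard =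
      if Fintype.card A = 2 then
        Nat.card {p : Subgroup G × Subgroup G // p.1 ≤ p.2} -
          Nat.card {H : Subgroup G // H.index = 2}
      else Nat.card {p : Subgroup G × Subgroup G // p.1 ≤ p.2} := by
  split_ifs with hA
  · have : movePairs (Orbits.stabilizer (G := G) (A := A)) =
        {p | p.1 ≤ p.2} \ (fun H => (H, H)) '' {H | H.index = 2} := by
      ext ⟨H, K⟩
      rw [mem_movePairs_iff hded]
      simp only [hA, Set.mem_sdiff, Set.mem_ofPred_eq, Set.mem_image, Prod.mk.injEq, true_and]
      constructor
      · rintro ⟨hle, hH⟩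
        exact ⟨hle, fun ⟨L, hL, hLH, hLK⟩ => hH ⟨hLH ▸ hLK, hLH ▸ hL⟩⟩
      · rintro ⟨hle, hH⟩
        exact ⟨hle, fun ⟨hHK, hH2⟩ => hH ⟨H, hH2, rfl, hHK⟩⟩
    rw [this, Set.ncard_sdiff, Set.ncard_image_of_injective _ fun H K h => congrArg Prod.fst h]
    · rfl
    · rintro _ ⟨H, -, rfl⟩
      exact le_refl H
  · have : movePairs (Orbits.stabilizer (G := G) (A := A)) = {p | p.1 ≤ p.2} := by
      ext p
      simp [mem_movePairs_iff hded, hA]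
    rw [this]
    rfl

end RelativeRank

/-- relative rank of `ICA(G;A)` in `CA(G;A)`: for a finite Dedekind
group `G` and `|A| = q ≥ 2`, the least cardinality of a set `V` of `G`-equivariant
transformations such that the bijective `G`-equivariant transformations together with
`V` generate (under composition) the monoid of all `G`-equivariant transformations is
`E − I₂` if `q = 2` and `E` if `q ≥ 3`, where `E` is the number of pairs `(H,K)` of
subgroups of `G` with `H ≤ K` and `I₂` is the number of subgroups of index `2`. -/
theorem relative_rank_ICA [Group G] [Fintype G] [Fintype A]
    (hded : ∀ H : Subgroup G, H.Normal) (hq : 2 ≤ Fintype.card A) :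
    IsLeast
      {k : ℕ | ∃ V : Finset (Function.End (G → A)),
        V.card = k ∧ (∀ τ ∈ V, equivariant τ) ∧
        ∀ σ : Function.End (G → A), equivariant σ →
          σ ∈ Submonoid.closure
            ({τ : Function.End (G → A) | equivariant τ ∧ Function.Bijective τ} ∪ ↑V)}
      (if Fintype.card A = 2 then
        Nat.card {p : Subgroup G × Subgroup G // p.1 ≤ p.2} -
          Nat.card {H : Subgroup G // H.index = 2}
      else
        Nat.card {p : Subgroup G × Subgroup G // p.1 ≤ p.2}) := by
  have : Nontrivial A := Fintype.one_lt_card_iff_nontrivial.1 hq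
  rw [← ncard_movePairs hded]
  obtain ⟨V, hVcard, hV, hVgen⟩ := exists_generating_finset (G := G) (A := A) hded
  refine ⟨⟨V, le_antisymm hVcard (ncard_movePairs_le_card hded hV hVgen), hV, hVgen⟩, ?_⟩
  rintro k ⟨V', rfl, hV', hV'gen⟩
  exact ncard_movePairs_le_card hded hV' hV'gen
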